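/- Let A and B be Frobenius monoids in a monoidal dagger category and let f : A → B be a monoid homomorphism that is also a comonoid homomorphism with respect to the comonoid structures (m_A†, u_A†) and (m_B†, u_B†). Then f is an isomorphism. -/

import Mathlib

open CategoryTheory Category MonoidalCategory

universe v u

/-- A dagger structure on a category: a contravariant, identity-on-objects,
involutive operation on morphisms. -/
class DaggerStruct (C : Type u) [Category.{v} C] where
  dag : ∀ {X Y : C}, (X ⟶ Y) → (Y ⟶ X)
  dag_dag : ∀ {X Y : C} (f : X ⟶ Y), dag (dag f) = f
  dag_id : ∀ X : C, dag (𝟙 X) = 𝟙 X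
  dag_comp : ∀ {X Y Z : C} (f : X ⟶ Y) (g : Y ⟶ Z), dag (f ≫ g) = dag g ≫ dag f

notation:max f "†" => DaggerStruct.dag f

/-- A monoidal dagger category: the dagger cooperates with the monoidal structure. -/
class MonoidalDagger (C : Type u) [Category.{v} C] [MonoidalCategory C] extends
    DaggerStruct C where
  dag_tensor : ∀ {X₁ Y₁ X₂ Y₂ : C} (f : X₁ ⟶ Y₁) (g : X₂ ⟶ Y₂), (f ⊗ₘ g)† = f† ⊗ₘ g†
  assoc_unitary : ∀ X Y Z : C, ((α_ X Y Z).hom)† = (α_ X Y Z).inv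
  lunitor_unitary : ∀ X : C, ((λ_ X).hom)† = (λ_ X).inv
  runitor_unitary : ∀ X : C, ((ρ_ X).hom)† = (ρ_ X).inv

/-- A symmetric monoidal dagger category: additionally the symmetries are unitary. -/
class SymmetricDagger (C : Type u) [Category.{v} C] [MonoidalCategory C]
    [SymmetricCategory C] extends MonoidalDagger C where
  braiding_unitary : ∀ X Y : C, ((β_ X Y).hom)† = (β_ X Y).inv

/-- A monoid object, given by explicit data. -/
structure IsMonoidObj {C : Type u} [Category.{v} C] [MonoidalCategory C] (A : C)
    (m : A ⊗ A ⟶ A) (u : 𝟙_ C ⟶ A) : Prop where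
  mul_assoc : (m ⊗ₘ 𝟙 A) ≫ m = (α_ A A A).hom ≫ (𝟙 A ⊗ₘ m) ≫ m
  one_mul : (u ⊗ₘ 𝟙 A) ≫ m = (λ_ A).hom
  mul_one : (𝟙 A ⊗ₘ u) ≫ m = (ρ_ A).hom

/-- A Frobenius monoid in a monoidal dagger category. -/
structure IsFrobeniusMonoid {C : Type u} [Category.{v} C] [MonoidalCategory C]
    [MonoidalDagger C] (A : C) (m : A ⊗ A ⟶ A) (u : 𝟙_ C ⟶ A) extends
    IsMonoidObj A m u : Prop where
  frobenius : (m† ⊗ₘ 𝟙 A) ≫ (α_ A A A).hom ≫ (𝟙 A ⊗ₘ m) =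
    (𝟙 A ⊗ₘ m†) ≫ (α_ A A A).inv ≫ (m ⊗ₘ 𝟙 A)

/-- A Frobenius monad on a dagger category. -/
structure IsFrobeniusMonad {C : Type u} [Category.{v} C] [DaggerStruct C]
    (T : Monad C) : Prop where
  map_dag : ∀ {X Y : C} (f : X ⟶ Y), T.map (f†) = (T.map f)†
  frobenius : ∀ A : C,
    ((T.μ.app (T.obj A))†) ≫ T.map (T.μ.app A) =
      T.map ((T.μ.app A)†) ≫ T.μ.app (T.obj A)

/-!
The cup `u ≫ m†` and cap `m ≫ u†` of a Frobenius monoid satisfy the snake equation: pushing the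
unit through the Frobenius law reduces it to the unit laws and the dagger of `mul_one`. So `A` and
`B` are self-dual, and a monoid and comonoid homomorphism `f` carries the cup of `A` to the cup
of `B` and the cap of `B` back to the cap of `A`. Sliding `f` along the strings then shows that
the mate of `f` (bend the input of `f` with the cup of `A` and its output with the cap of `B`) is
a two-sided inverse of `f`, each side collapsing by one snake equation.
-/

namespace MonoidalDagger

variable {C : Type u} [Category.{v} C] [MonoidalCategory C] [MonoidalDagger C]

theorem dag_whiskerLeft (X : C) {Y Z : C} (f : Y ⟶ Z) : (X ◁ f)† = X ◁ f† := by
  rw [← id_tensorHom, dag_tensor, DaggerStruct.dag_id, id_tensorHom]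

end MonoidalDagger

section SelfDuality

variable {C : Type u} [Category.{v} C] [MonoidalCategory C]

def selfDualMate {A B : C} (ηA : 𝟙_ C ⟶ A ⊗ A) (εB : B ⊗ B ⟶ 𝟙_ C) (f : A ⟶ B) : B ⟶ A :=
  (λ_ B).inv ≫ ηA ▷ B ≫ (α_ A A B).hom ≫ A ◁ (f ▷ B ≫ εB) ≫ (ρ_ A).hom

theorem comp_selfDualMate {A B : C} (ηA : 𝟙_ C ⟶ A ⊗ A) (εB : B ⊗ B ⟶ 𝟙_ C) (f : A ⟶ B) :
    f ≫ selfDualMate ηA εB f =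
      (λ_ A).inv ≫ ηA ▷ A ≫ (α_ A A A).hom ≫ A ◁ ((f ⊗ₘ f) ≫ εB) ≫ (ρ_ A).hom := by
  rw [tensorHom_def', assoc, whiskerLeft_comp, selfDualMate]
  simp only [leftUnitor_inv_naturality_assoc, whisker_exchange_assoc,
    associator_naturality_right_assoc, assoc]

theorem selfDualMate_comp {A B : C} (ηA : 𝟙_ C ⟶ A ⊗ A) (εB : B ⊗ B ⟶ 𝟙_ C) (f : A ⟶ B) :
    selfDualMate ηA εB f ≫ f =
      (λ_ B).inv ≫ (ηA ≫ (f ⊗ₘ f)) ▷ B ≫ (α_ B B B).hom ≫ B ◁ εB ≫ (ρ_ B).hom := by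
  rw [MonoidalCategory.tensorHom_def, comp_whiskerRight, comp_whiskerRight]
  simp only [assoc, associator_naturality_middle_assoc, associator_naturality_left_assoc,
    ← whiskerLeft_comp_assoc, ← whisker_exchange_assoc, rightUnitor_naturality, selfDualMate]

theorem isIso_of_preserves_cup_cap {A B : C} {ηA : 𝟙_ C ⟶ A ⊗ A} {εA : A ⊗ A ⟶ 𝟙_ C}
    {ηB : 𝟙_ C ⟶ B ⊗ B} {εB : B ⊗ B ⟶ 𝟙_ C}
    (snakeA : (λ_ A).inv ≫ ηA ▷ A ≫ (α_ A A A).hom ≫ A ◁ εA ≫ (ρ_ A).hom = 𝟙 A)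
    (snakeB : (λ_ B).inv ≫ ηB ▷ B ≫ (α_ B B B).hom ≫ B ◁ εB ≫ (ρ_ B).hom = 𝟙 B)
    (f : A ⟶ B) (hη : ηA ≫ (f ⊗ₘ f) = ηB) (hε : (f ⊗ₘ f) ≫ εB = εA) : IsIso f :=
  ⟨⟨selfDualMate ηA εB f, by rw [comp_selfDualMate, hε, snakeA],
    by rw [selfDualMate_comp, hη, snakeB]⟩⟩

end SelfDuality

namespace IsMonoidObj

variable {C : Type u} [Category.{v} C] [MonoidalCategory C] {A : C} {m : A ⊗ A ⟶ A}
  {u : 𝟙_ C ⟶ A}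

theorem leftUnitor_inv_unit_whiskerLeft_mul (h : IsMonoidObj A m u) {X Z : C}
    (d : X ⟶ A ⊗ Z) :
    (λ_ X).inv ≫ u ▷ X ≫ A ◁ d ≫ (α_ A A Z).inv ≫ m ▷ Z = d := by
  have one_mul : (λ_ A).inv ≫ u ▷ A ≫ m = 𝟙 A := by
    rw [← tensorHom_id, h.one_mul, Iso.inv_hom_id]
  rw [← whisker_exchange_assoc, ← leftUnitor_inv_naturality_assoc, leftUnitor_tensor_inv, assoc,
    associator_inv_naturality_left_assoc, Iso.hom_inv_id_assoc, ← comp_whiskerRight,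
    ← comp_whiskerRight, one_mul, id_whiskerRight, comp_id]

theorem dag_mul_whiskerLeft_dag_unit [MonoidalDagger C] (h : IsMonoidObj A m u) :
    m† ≫ A ◁ u† = (ρ_ A).inv := by
  rw [← MonoidalDagger.dag_whiskerLeft, ← DaggerStruct.dag_comp, ← id_tensorHom, h.mul_one,
    MonoidalDagger.runitor_unitary]

end IsMonoidObj

namespace IsFrobeniusMonoid

variable {C : Type u} [Category.{v} C] [MonoidalCategory C] [MonoidalDagger C]
  {A : C} {m : A ⊗ A ⟶ A} {u : 𝟙_ C ⟶ A}

theorem snake (h : IsFrobeniusMonoid A m u) :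
    (λ_ A).inv ≫ (u ≫ m†) ▷ A ≫ (α_ A A A).hom ≫ A ◁ (m ≫ u†) ≫ (ρ_ A).hom = 𝟙 A := by
  have frobenius : m† ▷ A ≫ (α_ A A A).hom ≫ A ◁ m = A ◁ m† ≫ (α_ A A A).inv ≫ m ▷ A := by
    simpa only [tensorHom_id, id_tensorHom] using h.frobenius
  calc _ = ((λ_ A).inv ≫ u ▷ A ≫ A ◁ m† ≫ (α_ A A A).inv ≫ m ▷ A) ≫ A ◁ u† ≫ (ρ_ A).hom := by
        simp only [comp_whiskerRight, whiskerLeft_comp, assoc, reassoc_of% frobenius]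
    _ = 𝟙 A := by
        rw [h.leftUnitor_inv_unit_whiskerLeft_mul,
          reassoc_of% h.dag_mul_whiskerLeft_dag_unit, Iso.inv_hom_id]

end IsFrobeniusMonoid

/-- STATEMENT 16: a monoid homomorphism between Frobenius monoids in a monoidal dagger
category that is also a comonoid homomorphism (for the dagger comonoid structures) is an
isomorphism. -/
theorem frobenius_mon_comon_hom_iso {C : Type u} [Category.{v} C] [MonoidalCategory C]
    [MonoidalDagger C] {A B : C} {mA : A ⊗ A ⟶ A} {uA : 𝟙_ C ⟶ A} {mB : B ⊗ B ⟶ B}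
    {uB : 𝟙_ C ⟶ B} (hA : IsFrobeniusMonoid A mA uA) (hB : IsFrobeniusMonoid B mB uB)
    (f : A ⟶ B)
    (hm : mA ≫ f = (f ⊗ₘ f) ≫ mB) (hu : uA ≫ f = uB)
    (hcm : f ≫ (mB†) = (mA†) ≫ (f ⊗ₘ f)) (hcu : f ≫ (uB†) = uA†) :
    IsIso f := by
  have cup : (uA ≫ mA†) ≫ (f ⊗ₘ f) = uB ≫ mB† := by rw [assoc, ← hcm, reassoc_of% hu]
  have cap : (f ⊗ₘ f) ≫ mB ≫ uB† = mA ≫ uA† := by rw [← reassoc_of% hm, hcu]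
  exact isIso_of_preserves_cup_cap hA.snake hB.snake f cup cap
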